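/- Assume the Setup (Notation 7.1), and let Z ⊆ Q • α be a subset that intersects both γ = α ∩ β and its complement γᶜ. Then: (a) for all g ∈ Q, B does not separate g • Z; (b) for all g ∈ Q, β separates g • Z if and only if Z ∩ (Q • A) ≠ ∅; (c) for all g ∈ P, γ separates g • Z, and α separates g • Z if and only if Z ∩ (Q • α ∖ α) ≠ ∅; (d) for all g ∈ Q ∖ P, |γ|*_{g • Z} ≤ |α|*_{g • Z}. -/

import Mathlib

/-!
Separation is invariant under translating both sets. Elements of `Q` fix `β` and `Q • α`, and
elements of `P` fix `α`, `β` and `γ` as well, so (a)–(c) become statements about `Z` itself,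
which follow from `Z ⊆ Q • α` and `Q • A = Q • α \ β`. For `g ∈ Q \ P` the edge property
makes `g • α` disjoint from `α`, so `g • Z` meets `αᶜ`, and then separating by `γ ⊆ α` forces
separating by `α`.
-/

open Pointwise

open scoped Classical in
/-- `sep X Z` is the indicator `|X|*_Z`: it is `1` if `X` separates `Z`
(i.e. `Z` meets both `X` and its complement) and `0` otherwise. -/
noncomputable def sep {E : Type*} (X Z : Set E) : ℕ :=
  if (Z ∩ X).Nonempty ∧ (Z ∩ Xᶜ).Nonempty then 1 else 0

section Separation

open Set

variable {E : Type*}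

lemma sep_eq_one_iff (X Z : Set E) :
    sep X Z = 1 ↔ (Z ∩ X).Nonempty ∧ (Z ∩ Xᶜ).Nonempty := by
  unfold sep; split_ifs with h <;> simp [h]

lemma sep_le_one (X Z : Set E) : sep X Z ≤ 1 := by
  unfold sep; split_ifs <;> simp

lemma sep_eq_zero_of_subset {X Z : Set E} (h : Z ⊆ X) : sep X Z = 0 := by
  unfold sep
  rw [if_neg]
  rintro ⟨-, z, hzZ, hzX⟩
  exact hzX (h hzZ)

lemma sep_eq_one_iff_of_inter_nonempty {X Z : Set E} (h : (Z ∩ X).Nonempty) :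
    sep X Z = 1 ↔ (Z ∩ Xᶜ).Nonempty := by
  rw [sep_eq_one_iff, and_iff_right h]

lemma sep_le_sep_of_subset {X Y Z : Set E} (hYX : Y ⊆ X) (hZX : (Z ∩ Xᶜ).Nonempty) :
    sep Y Z ≤ sep X Z := by
  by_cases hY : sep Y Z = 1
  · have hZY := ((sep_eq_one_iff Y Z).mp hY).1
    rw [hY, ((sep_eq_one_iff X Z).mpr ⟨hZY.mono (inter_subset_inter_right Z hYX), hZX⟩)]
  · have := sep_le_one Y Z
    omega

variable {G : Type*} [Group G] [MulAction G E]

lemma sep_smul_smul (g : G) (X Z : Set E) : sep (g • X) (g • Z) = sep X Z := by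
  unfold sep
  rw [← smul_set_compl, ← smul_set_inter, ← smul_set_inter, smul_set_nonempty, smul_set_nonempty]

lemma sep_smul_of_smul_eq {g : G} {X : Set E} (hX : g • X = X) (Z : Set E) :
    sep X (g • Z) = sep X Z := by
  conv_lhs => rw [← hX]
  exact sep_smul_smul g X Z

end Separation

section Orbit

open Set

variable {G E : Type*} [Group G] [MulAction G E]

lemma smul_biUnion_subgroup_smul {H : Subgroup G} {g : G} (hg : g ∈ H) (s : Set E) :
    g • ⋃ h ∈ H, h • s = ⋃ h ∈ H, h • s := by
  refine subset_antisymm ?_ ?_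
  · rw [smul_set_iUnion₂]
    refine iUnion₂_subset fun h hh => ?_
    rw [smul_smul]
    exact subset_biUnion_of_mem (u := fun k : G => k • s) (mul_mem hg hh)
  · refine iUnion₂_subset fun h hh => ?_
    rw [smul_set_iUnion₂]
    refine (subset_of_eq ?_).trans
      (subset_biUnion_of_mem (u := fun k : G => g • k • s) (mul_mem (inv_mem hg) hh))
    rw [smul_smul, mul_inv_cancel_left]

lemma biUnion_smul_sdiff_of_smul_eq {H : Subgroup G} {s t : Set E}
    (ht : ∀ h ∈ H, h • t = t) :
    ⋃ h ∈ H, h • (s \ t) = (⋃ h ∈ H, h • s) \ t := by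
  simp only [iUnion_sdiff]
  refine iUnion₂_congr fun h hh => ?_
  rw [smul_set_sdiff, ht h hh]

end Orbit

theorem stmt_5_general {G E : Type*} [Group G] [MulAction G E]
    (α β : Set E)
    (hedgeα : ∀ x : G, (α ∩ x • α).Nonempty → x • α = α)
    (P Q : Subgroup G)
    (hP : P = MulAction.stabilizer G α)
    (hQ : Q = MulAction.stabilizer G β)
    (hPQ : P ≤ Q)
    (γ A B : Set E)
    (hγ : γ = α ∩ β) (hA : A = α \ γ) (hB : B = β ∪ ⋃ q ∈ Q, q • α)
    (Z : Set E) (hZ : Z ⊆ ⋃ q ∈ Q, q • α)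
    (hZγ : (Z ∩ γ).Nonempty) (hZγc : (Z ∩ γᶜ).Nonempty) :
    (∀ g ∈ Q, sep B (g • Z) = 0) ∧
    (∀ g ∈ Q, (sep β (g • Z) = 1 ↔ (Z ∩ ⋃ q ∈ Q, q • A).Nonempty)) ∧
    (∀ g ∈ P, sep γ (g • Z) = 1 ∧
      (sep α (g • Z) = 1 ↔ (Z ∩ ((⋃ q ∈ Q, q • α) \ α)).Nonempty)) ∧
    (∀ g ∈ Q, g ∉ P → sep γ (g • Z) ≤ sep α (g • Z)) := by
  subst hP hQ hγ hA hB
  have hZα : (Z ∩ α).Nonempty := hZγ.mono (Set.inter_subset_inter_right Z Set.inter_subset_left)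
  have hZβ : (Z ∩ β).Nonempty := hZγ.mono (Set.inter_subset_inter_right Z Set.inter_subset_right)
  refine ⟨fun g hg => ?_, fun g hg => ?_, fun g hg => ?_, fun g _ hgP => ?_⟩
  · refine sep_eq_zero_of_subset ?_
    rw [← smul_biUnion_subgroup_smul hg]
    exact (Set.smul_set_mono hZ).trans Set.subset_union_right
  · rw [sep_smul_of_smul_eq hg, sep_eq_one_iff_of_inter_nonempty hZβ, Set.sdiff_self_inter,
      biUnion_smul_sdiff_of_smul_eq (fun q hq => hq), ← Set.inter_sdiff_assoc,
      Set.inter_eq_left.mpr hZ, Set.sdiff_eq]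
  · have hgα : g • α = α := hg
    have hgβ : g • β = β := hPQ hg
    rw [sep_smul_of_smul_eq (by rw [Set.smul_set_inter, hgα, hgβ]), sep_smul_of_smul_eq hgα,
      sep_eq_one_iff, sep_eq_one_iff_of_inter_nonempty hZα, ← Set.inter_sdiff_assoc,
      Set.inter_eq_left.mpr hZ, Set.sdiff_eq]
    exact ⟨⟨hZγ, hZγc⟩, Iff.rfl⟩
  · refine sep_le_sep_of_subset Set.inter_subset_left ?_
    obtain ⟨z, hzZ, hzα⟩ := hZα
    exact ⟨g • z, Set.smul_mem_smul_set hzZ,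
      fun hgz => hgP (hedgeα g ⟨g • z, hgz, Set.smul_mem_smul_set hzα⟩)⟩

/-- Setup (Notation 7.1), with `Z ⊆ Q • α` meeting both `γ = α ∩ β` and `γᶜ`.
Conclusions (a)–(d) of Lemma 7.4. -/
theorem stmt_5 {G E : Type*} [Group G] [MulAction G E]
    (α β : Set E) (hα : α.Nonempty) (hβ : β.Nonempty)
    (hedgeα : ∀ x : G, (α ∩ x • α).Nonempty → x • α = α)
    (hedgeβ : ∀ x : G, (β ∩ x • β).Nonempty → x • β = β)
    (P Q : Subgroup G)
    (hP : P = MulAction.stabilizer G α)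
    (hQ : Q = MulAction.stabilizer G β)
    (hαβ : (α ∩ β).Nonempty)
    (hPQ : P ≤ Q)
    (hsimple : ∀ g : G, (α ∩ g • β).Nonempty → g ∈ Q)
    (γ A B : Set E)
    (hγ : γ = α ∩ β) (hA : A = α \ γ) (hB : B = β ∪ ⋃ q ∈ Q, q • α)
    (Z : Set E) (hZ : Z ⊆ ⋃ q ∈ Q, q • α)
    (hZγ : (Z ∩ γ).Nonempty) (hZγc : (Z ∩ γᶜ).Nonempty) :
    (∀ g ∈ Q, sep B (g • Z) = 0) ∧
    (∀ g ∈ Q, (sep β (g • Z) = 1 ↔ (Z ∩ ⋃ q ∈ Q, q • A).Nonempty)) ∧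
    (∀ g ∈ P, sep γ (g • Z) = 1 ∧
      (sep α (g • Z) = 1 ↔ (Z ∩ ((⋃ q ∈ Q, q • α) \ α)).Nonempty)) ∧
    (∀ g ∈ Q, g ∉ P → sep γ (g • Z) ≤ sep α (g • Z)) :=
  stmt_5_general α β hedgeα P Q hP hQ hPQ γ A B hγ hA hB Z hZ hZγ hZγc
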